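/- arXiv:1306.3396 — 3 statements merged into one kernel-verified Lean document; each statement's English description precedes it below -/
import Mathlib

section
/- For ω ≥ 1 and 1/√ω ≤ γ ≤ √ω, define φ^ω_γ(x) = π/2 + √ω·arcsin((γ/√ω)·cos x) for |x| ≤ π/2, and φ^ω_γ(x) = arccos(γ√ω·sin((|x|-π/2)/√ω)) for π/2 < |x| ≤ π/2 + √ω·arcsin(1/(γ√ω)). Then φ^ω_{1/γ} is the inverse function of φ^ω_γ on [0, π/2 + √ω·arcsin(1/(γ√ω))]. -/
open Real Set

/-- The function `φ^ω_γ`, defined piecewise. -/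
noncomputable def phiF (om ga x : ℝ) : ℝ :=
  if |x| ≤ π / 2 then
    π / 2 + Real.sqrt om * Real.arcsin ((ga / Real.sqrt om) * Real.cos x)
  else
    Real.arccos (ga * Real.sqrt om * Real.sin ((|x| - π / 2) / Real.sqrt om))

/-!
On `[0, π/2]` the map `φ^ω_γ` lands in `[π/2, ∞)`, and on `(π/2, π/2 + √ω·arcsin(1/(γ√ω))]` it
lands in `[0, π/2]`, so `φ^ω_{1/γ}` undoes it with its other branch: `arccos ∘ cos` and
`arcsin ∘ sin` cancel, and the factors `γ/√ω` and `γ⁻¹√ω` (resp. `γ√ω` and `γ⁻¹/√ω`) multiply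
to `1`. The bounds on `γ` keep the arguments of `arcsin` and `arccos` in `[-1, 1]`, and they are
invariant under `γ ↦ γ⁻¹`, which gives the second composition from the first.
-/

section

variable {om ga x : ℝ}

lemma phiF_of_abs_le (hx : |x| ≤ π / 2) :
    phiF om ga x = π / 2 + √om * arcsin (ga / √om * cos x) :=
  if_pos hx

lemma phiF_of_pi_div_two_lt (hx : π / 2 < x) :
    phiF om ga x = arccos (ga * √om * sin ((x - π / 2) / √om)) := by
  have hx0 : 0 ≤ x := by linarith [pi_pos]
  rw [phiF, if_neg (by rw [abs_of_nonneg hx0]; linarith), abs_of_nonneg hx0]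

lemma phiF_pi_div_two : phiF om ga (π / 2) = π / 2 := by
  rw [phiF_of_abs_le (by rw [abs_of_pos pi_div_two_pos]), cos_pi_div_two, mul_zero, arcsin_zero,
    mul_zero, add_zero]

lemma phiF_inv_phiF_of_lt_pi_div_two (hs : 0 < √om) (hga0 : 0 < ga) (hga : ga ≤ √om)
    (hx0 : 0 ≤ x) (hx : x < π / 2) : phiF om ga⁻¹ (phiF om ga x) = x := by
  set a := ga / √om * cos x
  have hcos : 0 < cos x := cos_pos_of_mem_Ioo ⟨by linarith, hx⟩
  have ha0 : 0 < a := mul_pos (div_pos hga0 hs) hcos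
  have ha1 : a ≤ 1 := mul_le_one₀ ((div_le_one hs).mpr hga) hcos.le (cos_le_one x)
  have hlt : π / 2 < π / 2 + √om * arcsin a :=
    lt_add_of_pos_right _ (mul_pos hs (arcsin_pos.mpr ha0))
  have hcancel : ga⁻¹ * √om * a = cos x := by
    simp only [a]
    field_simp
  rw [phiF_of_abs_le (abs_le.mpr ⟨by linarith [pi_pos], hx.le⟩), phiF_of_pi_div_two_lt hlt,
    add_sub_cancel_left, mul_div_cancel_left₀ _ hs.ne', sin_arcsin (by linarith) ha1, hcancel,
    arccos_cos hx0 (by linarith [pi_pos])]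

lemma phiF_inv_phiF_of_pi_div_two_lt (hs : 0 < √om) (hga : 1 ≤ ga * √om) (hx : π / 2 < x)
    (hxL : x ≤ π / 2 + √om * arcsin (1 / (ga * √om))) :
    phiF om ga⁻¹ (phiF om ga x) = x := by
  set t := (x - π / 2) / √om
  have hga0 : 0 < ga := pos_of_mul_pos_left (by linarith) hs.le
  have ht0 : 0 < t := div_pos (by linarith) hs
  have ht : t ≤ arcsin (1 / (ga * √om)) := by
    rw [div_le_iff₀ hs]
    linarith
  have htpi : t ≤ π / 2 := ht.trans (arcsin_le_pi_div_two _)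
  have hsin : sin t ≤ 1 / (ga * √om) :=
    (le_arcsin_iff_sin_le ⟨by linarith [pi_pos], htpi⟩
      ⟨by linarith [show 0 < 1 / (ga * √om) by positivity],
        div_le_one_of_le₀ hga (by linarith)⟩).mp ht
  set u := ga * √om * sin t
  have hu0 : 0 ≤ u :=
    mul_nonneg (by positivity) (sin_nonneg_of_nonneg_of_le_pi ht0.le (by linarith))
  have hu1 : u ≤ 1 := by
    calc u ≤ ga * √om * (1 / (ga * √om)) := mul_le_mul_of_nonneg_left hsin (by positivity)
      _ = 1 := by field_simp
  have hcancel : ga⁻¹ / √om * u = sin t := by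
    simp only [u]
    field_simp
  have hy : |arccos u| ≤ π / 2 :=
    abs_le.mpr ⟨by linarith [arccos_nonneg u, pi_pos], arccos_le_pi_div_two.mpr hu0⟩
  rw [phiF_of_pi_div_two_lt hx, phiF_of_abs_le hy, cos_arccos (by linarith) hu1, hcancel,
    arcsin_sin (by linarith) htpi]
  simp only [t]
  field_simp
  ring

theorem phiF_inv_phiF (hs : 0 < √om) (hga1 : 1 ≤ ga * √om) (hga2 : ga ≤ √om)
    (hx0 : 0 ≤ x) (hxL : x ≤ π / 2 + √om * arcsin (1 / (ga * √om))) :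
    phiF om ga⁻¹ (phiF om ga x) = x := by
  have hga0 : 0 < ga := pos_of_mul_pos_left (by linarith) hs.le
  rcases lt_trichotomy x (π / 2) with hx | rfl | hx
  · exact phiF_inv_phiF_of_lt_pi_div_two hs hga0 hga2 hx0 hx
  · rw [phiF_pi_div_two, phiF_pi_div_two]
  · exact phiF_inv_phiF_of_pi_div_two_lt hs hga1 hx hxL

end

/-- For `ω ≥ 1` and `1/√ω ≤ γ ≤ √ω`, `φ^ω_{1/γ}` is the inverse function of `φ^ω_γ`
on `[0, π/2 + √ω·arcsin(1/(γ√ω))]`. -/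
theorem stmt4 (om ga : ℝ) (hom : 1 ≤ om)
    (hga1 : 1 / Real.sqrt om ≤ ga) (hga2 : ga ≤ Real.sqrt om) :
    (∀ x ∈ Icc (0 : ℝ) (π / 2 + Real.sqrt om * Real.arcsin (1 / (ga * Real.sqrt om))),
      phiF om ga⁻¹ (phiF om ga x) = x) ∧
    (∀ x ∈ Icc (0 : ℝ) (π / 2 + Real.sqrt om * Real.arcsin (1 / (ga⁻¹ * Real.sqrt om))),
      phiF om ga (phiF om ga⁻¹ x) = x) := by
  have hs : 0 < √om := sqrt_pos.mpr (by linarith)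
  have hga : 1 ≤ ga * √om := by rwa [div_le_iff₀ hs] at hga1
  have hga0 : 0 < ga := pos_of_mul_pos_left (by linarith) hs.le
  have hinv1 : 1 ≤ ga⁻¹ * √om := by rwa [inv_mul_eq_div, one_le_div hga0]
  have hinv2 : ga⁻¹ ≤ √om := by rwa [inv_le_comm₀ hga0 hs, ← one_div, div_le_iff₀ hs]
  refine ⟨fun x hx => phiF_inv_phiF hs hga hga2 hx.1 hx.2, fun x hx => ?_⟩
  simpa only [inv_inv] using phiF_inv_phiF hs hinv1 hinv2 hx.1 hx.2
end

section
/- For ω ≥ 1 and 1/√ω ≤ γ ≤ √ω, the function φ^ω_γ defined by φ^ω_γ(x) = π/2 + √ω·arcsin((γ/√ω)·cos x) for |x| ≤ π/2 and φ^ω_γ(x) = arccos(γ√ω·sin((|x|-π/2)/√ω)) for π/2 < |x| ≤ π/2 + √ω·arcsin(1/(γ√ω)) is continuous, even, strictly positive on the open interval (-π/2 - √ω·arcsin(1/(γ√ω)), π/2 + √ω·arcsin(1/(γ√ω))), and vanishes at the endpoints. -/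
open Real Set

/-!
Both branches of `φ^ω_γ` are continuous and depend on `x` only through `|x|` (the inner one
through `cos x = cos |x|`); at `|x| = π/2` they both equal `π/2`, since `cos (π/2) = 0` and
`arccos 0 = π/2`. On `|x| ≤ π/2` the arcsine term is nonnegative, so the value is at least `π/2`.
Beyond `π/2`, write `c = γ√ω ≥ 1` and `u = (|x| - π/2)/√ω`: the arccosine is positive as long as
`c sin u < 1`, i.e. `u < arcsin (1/c)`, and it vanishes at `u = arcsin (1/c)`, which is `|x| = L`.
-/

theorem phiF_neg (om ga x : ℝ) : phiF om ga (-x) = phiF om ga x := by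
  simp only [phiF, abs_neg, cos_neg]

theorem continuous_phiF (om ga : ℝ) : Continuous (phiF om ga) := by
  refine Continuous.if_le (by fun_prop) ?_ continuous_abs continuous_const ?_
  · exact continuous_arccos.comp (continuous_const.mul
      (continuous_sin.comp ((continuous_abs.sub continuous_const).div_const _)))
  · intro x hx
    rw [← cos_abs, hx, cos_pi_div_two, sub_self, zero_div, sin_zero]
    simp only [mul_zero, arcsin_zero, arccos_zero, add_zero]

theorem phiF_pos_of_abs_le {om ga x : ℝ} (hga : 0 ≤ ga) (hx : |x| ≤ π / 2) :
    0 < phiF om ga x := by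
  rw [phiF, if_pos hx]
  have hcos : 0 ≤ cos x := by
    rw [← cos_abs]
    exact cos_nonneg_of_mem_Icc ⟨by linarith [abs_nonneg x, pi_pos], hx⟩
  have harcsin : 0 ≤ arcsin (ga / √om * cos x) := arcsin_nonneg.mpr (by positivity)
  have := mul_nonneg (sqrt_nonneg om) harcsin
  linarith [pi_pos]

theorem phiF_pos_of_pi_div_two_lt {om ga x : ℝ} (hx : π / 2 < |x|)
    (hxL : |x| < π / 2 + √om * arcsin (1 / (ga * √om))) : 0 < phiF om ga x := by
  rw [phiF, if_neg hx.not_ge, arccos_pos]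
  set u := (|x| - π / 2) / √om
  have hs : 0 < √om := by
    refine (sqrt_nonneg om).lt_of_ne fun h => ?_
    rw [← h, zero_mul] at hxL
    linarith
  have hu : 0 < u := div_pos (by linarith) hs
  have hu_lt : u < arcsin (1 / (ga * √om)) := by
    rw [div_lt_iff₀ hs]
    linarith
  have hsin : sin u < 1 / (ga * √om) :=
    (lt_arcsin_iff_sin_lt' ⟨by linarith [pi_pos], hu_lt.trans_le (arcsin_le_pi_div_two _)⟩).mp
      hu_lt
  have hsin_pos : 0 < sin u :=
    sin_pos_of_pos_of_lt_pi hu (by linarith [arcsin_le_pi_div_two (1 / (ga * √om))])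
  have hc : 0 < ga * √om := one_div_pos.mp (hsin_pos.trans hsin)
  calc ga * √om * sin u < ga * √om * (1 / (ga * √om)) := mul_lt_mul_of_pos_left hsin hc
    _ = 1 := mul_one_div_cancel hc.ne'

theorem phiF_endpoint_eq_zero {om ga : ℝ} (hom : 0 < om) (hc : 1 ≤ ga * √om) :
    phiF om ga (π / 2 + √om * arcsin (1 / (ga * √om))) = 0 := by
  have hs : 0 < √om := sqrt_pos.mpr hom
  have hc0 : 0 < ga * √om := one_pos.trans_le hc
  have hinv : 0 < 1 / (ga * √om) := one_div_pos.mpr hc0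
  have harcsin : 0 < arcsin (1 / (ga * √om)) := arcsin_pos.mpr hinv
  have hL : π / 2 < π / 2 + √om * arcsin (1 / (ga * √om)) :=
    lt_add_of_pos_right _ (mul_pos hs harcsin)
  rw [phiF, abs_of_pos (pi_div_two_pos.trans hL), if_neg hL.not_ge, add_sub_cancel_left,
    mul_div_cancel_left₀ _ hs.ne', sin_arcsin (by linarith) (div_le_one_of_le₀ hc hc0.le),
    mul_one_div_cancel hc0.ne', arccos_one]

theorem stmt5_general (om ga : ℝ) (hom : 1 ≤ om)
    (hga1 : 1 / Real.sqrt om ≤ ga)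
    (L : ℝ) (hL : L = π / 2 + Real.sqrt om * Real.arcsin (1 / (ga * Real.sqrt om))) :
    ContinuousOn (phiF om ga) (Icc (-L) L) ∧
    (∀ x, phiF om ga (-x) = phiF om ga x) ∧
    (∀ x ∈ Ioo (-L) L, 0 < phiF om ga x) ∧
    phiF om ga L = 0 ∧ phiF om ga (-L) = 0 := by
  have hom0 : 0 < om := one_pos.trans_le hom
  have hs : 0 < √om := sqrt_pos.mpr hom0
  have hc : 1 ≤ ga * √om := by rwa [div_le_iff₀ hs] at hga1
  have hphiL : phiF om ga L = 0 := hL ▸ phiF_endpoint_eq_zero hom0 hc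
  refine ⟨(continuous_phiF om ga).continuousOn, phiF_neg om ga, fun x hx => ?_, hphiL,
    (phiF_neg om ga L).trans hphiL⟩
  rcases le_or_gt |x| (π / 2) with hx' | hx'
  · exact phiF_pos_of_abs_le (hga1.trans' (by positivity)) hx'
  · exact phiF_pos_of_pi_div_two_lt hx' (hL ▸ abs_lt.mpr hx)

/-- For `ω ≥ 1` and `1/√ω ≤ γ ≤ √ω`, writing `L = π/2 + √ω·arcsin(1/(γ√ω))`, the
function `φ^ω_γ` is continuous on `[-L, L]`, even, strictly positive on `(-L, L)`,
and vanishes at `±L`. -/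
theorem stmt5 (om ga : ℝ) (hom : 1 ≤ om)
    (hga1 : 1 / Real.sqrt om ≤ ga) (hga2 : ga ≤ Real.sqrt om)
    (L : ℝ) (hL : L = π / 2 + Real.sqrt om * Real.arcsin (1 / (ga * Real.sqrt om))) :
    ContinuousOn (phiF om ga) (Icc (-L) L) ∧
    (∀ x, phiF om ga (-x) = phiF om ga x) ∧
    (∀ x ∈ Ioo (-L) L, 0 < phiF om ga x) ∧
    phiF om ga L = 0 ∧ phiF om ga (-L) = 0 :=
  stmt5_general om ga hom hga1 L hL
end

section
/- For ω ≥ 1, the function γ ↦ A(γ) = ∫₀^{π/2} [arcsin((γ/√ω)·cos x) + arcsin((1/(γ√ω))·cos x)] dx, defined for γ ∈ [1/√ω, √ω], has derivative A'(γ) = (1/γ)·∫₀^{π/2} [1/√(ω/γ² - cos²x) - 1/√(ωγ² - cos²x)]·cos x dx, which is ≥ 0 for γ ≥ 1 and ≤ 0 for γ ≤ 1. Consequently A attains its minimum on [1/√ω, √ω] at γ = 1. -/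
/-!
With `B p = ∫₀^{π/2} arcsin (p cos x) dx` we have `A γ = B (γ/√ω) + B (1/(γ√ω))`. For `|p| < 1`
one may differentiate under the integral sign, `B' p = ∫₀^{π/2} cos x / √(1 - p² cos² x) dx`,
because the integrand's `p`-derivative is bounded uniformly for `|p| ≤ r < 1`. The chain rule and
`√(1 - t² c²) = t √(t⁻² - c²)` turn `B'` into the stated formula for `A'`. As `X ↦ 1/√(X - c²)`
decreases and `ω/γ² ≤ ωγ²` exactly when `γ ≥ 1`, `A'` has the sign of `γ - 1`, so `A` decreases
on `[1/√ω, 1]` and increases on `[1, √ω]`.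
-/

open Real Set intervalIntegral

lemma abs_mul_lt_one {p y : ℝ} (hp : |p| < 1) (hy : |y| ≤ 1) : |p * y| < 1 := by
  rw [abs_mul]
  exact mul_lt_one_of_nonneg_of_lt_one_left (abs_nonneg p) hp hy

lemma hasDerivAt_arcsin_mul_const {q y : ℝ} (h : |q * y| < 1) :
    HasDerivAt (fun q => arcsin (q * y)) (y / √(1 - (q * y) ^ 2)) q := by
  obtain ⟨hlo, hhi⟩ := abs_lt.1 h
  have := (hasDerivAt_arcsin hlo.ne' hhi.ne).comp q (hasDerivAt_mul_const y)
  rwa [one_div_mul_eq_div] at this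

lemma continuous_div_sqrt_one_sub_mul_sq {f : ℝ → ℝ} (hf : Continuous f) (hf1 : ∀ x, |f x| ≤ 1)
    {p : ℝ} (hp : |p| < 1) : Continuous fun x => f x / √(1 - (p * f x) ^ 2) := by
  refine hf.div (by fun_prop) fun x => (sqrt_pos.2 ?_).ne'
  rw [sub_pos, sq_lt_one_iff_abs_lt_one]
  exact abs_mul_lt_one hp (hf1 x)

lemma hasDerivAt_integral_arcsin_mul {f : ℝ → ℝ} (hf : Continuous f) (hf1 : ∀ x, |f x| ≤ 1)
    {p : ℝ} (hp : |p| < 1) (a b : ℝ) :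
    HasDerivAt (fun q => ∫ x in a..b, arcsin (q * f x))
      (∫ x in a..b, f x / √(1 - (p * f x) ^ 2)) p := by
  obtain ⟨r, hpr, hr⟩ := exists_between hp
  have hball : ∀ q ∈ Metric.ball p (r - |p|), |q| < r := fun q hq => by
    have := abs_sub_abs_le_abs_sub q p
    rw [Metric.mem_ball, dist_eq_norm, norm_eq_abs] at hq
    linarith
  have hbound : ∀ q, |q| < r → ∀ x, ‖f x / √(1 - (q * f x) ^ 2)‖ ≤ 1 / √(1 - r ^ 2) := by
    intro q hq x
    have hqr : (q * f x) ^ 2 ≤ r ^ 2 := by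
      rw [sq_le_sq, abs_mul, abs_of_pos ((abs_nonneg p).trans_lt hpr)]
      have := hf1 x
      nlinarith [abs_nonneg q, abs_nonneg (f x)]
    have hr2 : 0 < 1 - r ^ 2 := by nlinarith [abs_nonneg p]
    rw [norm_div, norm_eq_abs, norm_eq_abs, abs_of_nonneg (sqrt_nonneg _)]
    exact div_le_div₀ zero_le_one (hf1 x) (sqrt_pos.2 hr2) (sqrt_le_sqrt (by linarith))
  have hcont : ∀ q : ℝ, Continuous fun x => arcsin (q * f x) := fun q => by fun_prop
  refine (hasDerivAt_integral_of_dominated_loc_of_deriv_le (bound := fun _ => 1 / √(1 - r ^ 2))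
    (Metric.ball_mem_nhds p (sub_pos.2 hpr))
    (.of_forall fun q => (hcont q).aestronglyMeasurable) ((hcont p).intervalIntegrable _ _)
    (continuous_div_sqrt_one_sub_mul_sq hf hf1 hp).aestronglyMeasurable
    (.of_forall fun x _ q hq => hbound q (hball q hq) x) intervalIntegrable_const
    (.of_forall fun x _ q hq => hasDerivAt_arcsin_mul_const ?_)).2
  exact abs_mul_lt_one ((hball q hq).trans hr) (hf1 x)

lemma integral_arcsin_mul_add {f : ℝ → ℝ} (hf : Continuous f) (p q a b : ℝ) :
    ∫ x in a..b, (arcsin (p * f x) + arcsin (q * f x)) =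
      (∫ x in a..b, arcsin (p * f x)) + ∫ x in a..b, arcsin (q * f x) :=
  integral_add ((by fun_prop : Continuous fun x => arcsin (p * f x)).intervalIntegrable _ _)
    ((by fun_prop : Continuous fun x => arcsin (q * f x)).intervalIntegrable _ _)

lemma div_sqrt_one_sub_mul_sq {t u : ℝ} (ht : 0 < t) (htu : t ^ 2 * u = 1) (c : ℝ) :
    c / √(1 - (t * c) ^ 2) = 1 / t * (1 / √(u - c ^ 2) * c) := by
  have : 1 - (t * c) ^ 2 = t ^ 2 * (u - c ^ 2) := by linear_combination -htu
  rw [this, sqrt_mul (sq_nonneg t), sqrt_sq ht.le]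
  ring

lemma one_lt_div_sq_and_mul_sq {om ga : ℝ} (hom : 0 < om) (hga : ga ∈ Ioo (1 / √om) √om) :
    0 < ga ∧ 1 < om / ga ^ 2 ∧ 1 < om * ga ^ 2 := by
  have hs : 0 < √om := sqrt_pos.2 hom
  have hsq : √om ^ 2 = om := sq_sqrt hom.le
  have hga0 : 0 < ga := (by positivity : 0 < 1 / √om).trans hga.1
  have h1 : 1 < ga * √om := (div_lt_iff₀ hs).1 hga.1
  refine ⟨hga0, ?_, ?_⟩
  · rw [one_lt_div (by positivity), ← hsq]
    nlinarith [hga.2]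
  · rw [← hsq]
    nlinarith

lemma hasDerivAt_integral_arcsin_add {om ga : ℝ} (hom : 0 < om)
    (hga : ga ∈ Ioo (1 / √om) √om) :
    HasDerivAt (fun ga => ∫ x in (0 : ℝ)..(π / 2),
      (arcsin ((ga / √om) * cos x) + arcsin ((1 / (ga * √om)) * cos x)))
      ((1 / ga) * ∫ x in (0 : ℝ)..(π / 2),
        (1 / √(om / ga ^ 2 - cos x ^ 2) - 1 / √(om * ga ^ 2 - cos x ^ 2)) * cos x) ga := by
  set s := √om
  have hs : 0 < s := sqrt_pos.2 hom
  have hsq : s ^ 2 = om := sq_sqrt hom.le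
  have hga0 : 0 < ga := (one_lt_div_sq_and_mul_sq hom hga).1
  have h1 : |ga / s| < 1 := by
    rw [abs_of_pos (by positivity), div_lt_one hs]
    exact hga.2
  have h2 : |1 / (ga * s)| < 1 := by
    rw [abs_of_pos (by positivity), div_lt_one (by positivity), ← div_lt_iff₀ hs]
    exact hga.1
  have hB := fun {p : ℝ} (hp : |p| < 1) =>
    hasDerivAt_integral_arcsin_mul continuous_cos abs_cos_le_one hp 0 (π / 2)
  have hinv : HasDerivAt (fun g => 1 / (g * s)) (-(1 / ga ^ 2) * (1 / s)) ga := by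
    simpa only [one_div, mul_inv] using (hasDerivAt_inv hga0.ne').mul_const s⁻¹
  simp only [integral_arcsin_mul_add continuous_cos]
  refine ((hB h1).comp ga ((hasDerivAt_id ga).div_const s)).add
    ((hB h2).comp ga hinv) |>.congr_deriv ?_
  have hint : ∀ {p}, |p| < 1 → ∀ k : ℝ,
      IntervalIntegrable (fun x => cos x / √(1 - (p * cos x) ^ 2) * k)
        MeasureTheory.volume 0 (π / 2) :=
    fun hp k => ((continuous_div_sqrt_one_sub_mul_sq continuous_cos abs_cos_le_one hp).mul
      continuous_const).intervalIntegrable _ _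
  rw [← integral_mul_const, ← integral_mul_const, ← integral_add (hint h1 _) (hint h2 _),
    ← integral_const_mul]
  congr 1
  ext x
  rw [div_sqrt_one_sub_mul_sq (u := om / ga ^ 2) (by positivity) (by field_simp; exact hsq.symm),
    div_sqrt_one_sub_mul_sq (u := om * ga ^ 2) (by positivity) (by field_simp; exact hsq.symm)]
  field_simp
  ring

lemma continuousOn_integral_arcsin_add (om : ℝ) :
    ContinuousOn (fun ga => ∫ x in (0 : ℝ)..(π / 2),
      (arcsin ((ga / √om) * cos x) + arcsin ((1 / (ga * √om)) * cos x))) {0}ᶜ := by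
  have hB : Continuous fun p => ∫ x in (0 : ℝ)..(π / 2), arcsin (p * cos x) :=
    continuous_parametric_intervalIntegral_of_continuous' (by fun_prop) _ _
  simp only [integral_arcsin_mul_add continuous_cos, one_div, mul_inv]
  exact (hB.comp (continuous_id.div_const _)).continuousOn.add
    (hB.comp_continuousOn (continuousOn_inv₀.mul continuousOn_const))

lemma integral_sub_one_div_sqrt_mul_cos_nonneg {X Y : ℝ} (hX : 1 < X) (hXY : X ≤ Y) :
    0 ≤ ∫ x in (0 : ℝ)..(π / 2), (1 / √(X - cos x ^ 2) - 1 / √(Y - cos x ^ 2)) * cos x := by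
  refine integral_nonneg (by positivity) fun x hx => mul_nonneg ?_ ?_
  · have := cos_sq_le_one x
    exact sub_nonneg.2 (one_div_le_one_div_of_le (sqrt_pos.2 (by linarith))
      (sqrt_le_sqrt (by linarith)))
  · exact cos_nonneg_of_mem_Icc ⟨by linarith [hx.1, pi_pos], hx.2⟩

lemma integral_sub_one_div_sqrt_mul_cos_nonpos {X Y : ℝ} (hY : 1 < Y) (hYX : Y ≤ X) :
    ∫ x in (0 : ℝ)..(π / 2), (1 / √(X - cos x ^ 2) - 1 / √(Y - cos x ^ 2)) * cos x ≤ 0 := by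
  rw [← neg_nonneg, ← integral_neg]
  exact (integral_sub_one_div_sqrt_mul_cos_nonneg hY hYX).trans_eq
    (integral_congr fun x _ => by ring)

lemma div_sq_le_mul_sq {a x : ℝ} (ha : 0 ≤ a) (hx : 1 ≤ x) : a / x ^ 2 ≤ a * x ^ 2 :=
  (div_le_self ha (one_le_pow₀ hx)).trans (le_mul_of_one_le_right ha (one_le_pow₀ hx))

lemma mul_sq_le_div_sq {a x : ℝ} (ha : 0 ≤ a) (hx0 : 0 < x) (hx : x ≤ 1) :
    a * x ^ 2 ≤ a / x ^ 2 :=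
  (mul_le_of_le_one_right ha (pow_le_one₀ hx0.le hx)).trans
    (le_div_self ha (by positivity) (pow_le_one₀ hx0.le hx))

lemma isMinOn_Icc_of_hasDerivAt {f f' : ℝ → ℝ} {a b c : ℝ} (hc : c ∈ Icc a b)
    (hf : ContinuousOn f (Icc a b)) (hderiv : ∀ x ∈ Ioo a b, HasDerivAt f (f' x) x)
    (hleft : ∀ x ∈ Ioo a b, x ≤ c → f' x ≤ 0) (hright : ∀ x ∈ Ioo a b, c ≤ x → 0 ≤ f' x) :
    IsMinOn f (Icc a b) c := by
  intro x hx
  rcases le_total c x with hcx | hxc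
  · have hsub : Ioo c b ⊆ Ioo a b := Ioo_subset_Ioo_left hc.1
    refine monotoneOn_of_hasDerivWithinAt_nonneg (f' := f') (convex_Icc c b)
      (hf.mono (Icc_subset_Icc_left hc.1)) (fun y hy => ?_) (fun y hy => ?_)
      ⟨le_rfl, hc.2⟩ ⟨hcx, hx.2⟩ hcx
    · rw [interior_Icc] at hy ⊢
      exact (hderiv y (hsub hy)).hasDerivWithinAt
    · rw [interior_Icc] at hy
      exact hright y (hsub hy) hy.1.le
  · have hsub : Ioo a c ⊆ Ioo a b := Ioo_subset_Ioo_right hc.2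
    refine antitoneOn_of_hasDerivWithinAt_nonpos (f' := f') (convex_Icc a c)
      (hf.mono (Icc_subset_Icc_right hc.2)) (fun y hy => ?_) (fun y hy => ?_)
      ⟨hx.1, hxc⟩ ⟨hc.1, le_rfl⟩ hxc
    · rw [interior_Icc] at hy ⊢
      exact (hderiv y (hsub hy)).hasDerivWithinAt
    · rw [interior_Icc] at hy
      exact hleft y (hsub hy) hy.2.le

/-- For `ω ≥ 1`, the function
`A(γ) = ∫₀^{π/2} [arcsin((γ/√ω)cos x) + arcsin((1/(γ√ω))cos x)] dx` has derivative
`A'(γ) = (1/γ)·∫₀^{π/2} [1/√(ω/γ² - cos²x) - 1/√(ωγ² - cos²x)]·cos x dx` on the interior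
of `[1/√ω, √ω]`, which is `≥ 0` for `γ ≥ 1` and `≤ 0` for `γ ≤ 1`; consequently `A`
attains its minimum on `[1/√ω, √ω]` at `γ = 1`. -/
theorem stmt18 (om : ℝ) (hom : 1 ≤ om)
    (A A' : ℝ → ℝ)
    (hA : A = fun ga => ∫ x in (0 : ℝ)..(π / 2),
      (Real.arcsin ((ga / Real.sqrt om) * Real.cos x)
        + Real.arcsin ((1 / (ga * Real.sqrt om)) * Real.cos x)))
    (hA' : A' = fun ga => (1 / ga) * ∫ x in (0 : ℝ)..(π / 2),
      (1 / Real.sqrt (om / ga ^ 2 - Real.cos x ^ 2)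
        - 1 / Real.sqrt (om * ga ^ 2 - Real.cos x ^ 2)) * Real.cos x) :
    (∀ ga ∈ Ioo (1 / Real.sqrt om) (Real.sqrt om), HasDerivAt A (A' ga) ga) ∧
    (∀ ga ∈ Ioo (1 / Real.sqrt om) (Real.sqrt om), 1 ≤ ga → 0 ≤ A' ga) ∧
    (∀ ga ∈ Ioo (1 / Real.sqrt om) (Real.sqrt om), ga ≤ 1 → A' ga ≤ 0) ∧
    (∀ ga ∈ Icc (1 / Real.sqrt om) (Real.sqrt om), A 1 ≤ A ga) := by
  have hom0 : 0 < om := by linarith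
  have hderiv : ∀ ga ∈ Ioo (1 / √om) √om, HasDerivAt A (A' ga) ga := fun ga hga => by
    subst hA hA'
    exact hasDerivAt_integral_arcsin_add hom0 hga
  have hright : ∀ ga ∈ Ioo (1 / √om) √om, 1 ≤ ga → 0 ≤ A' ga := fun ga hga h1 => by
    obtain ⟨hga0, hX, -⟩ := one_lt_div_sq_and_mul_sq hom0 hga
    subst hA'
    exact mul_nonneg (by positivity)
      (integral_sub_one_div_sqrt_mul_cos_nonneg hX (div_sq_le_mul_sq hom0.le h1))
  have hleft : ∀ ga ∈ Ioo (1 / √om) √om, ga ≤ 1 → A' ga ≤ 0 := fun ga hga h1 => by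
    obtain ⟨hga0, -, hY⟩ := one_lt_div_sq_and_mul_sq hom0 hga
    subst hA'
    exact mul_nonpos_of_nonneg_of_nonpos (by positivity)
      (integral_sub_one_div_sqrt_mul_cos_nonpos hY (mul_sq_le_div_sq hom0.le hga0 h1))
  refine ⟨hderiv, hright, hleft, fun ga hga => ?_⟩
  have hone : (1 : ℝ) ∈ Icc (1 / √om) √om :=
    ⟨div_le_one_of_le₀ (one_le_sqrt.2 hom) (sqrt_nonneg om), one_le_sqrt.2 hom⟩
  have hcont : ContinuousOn A (Icc (1 / √om) √om) :=
    hA ▸ (continuousOn_integral_arcsin_add om).mono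
      fun g hg => ne_of_gt ((by positivity : 0 < 1 / √om).trans_le hg.1)
  exact isMinOn_Icc_of_hasDerivAt hone hcont hderiv hleft hright hga
end
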